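/- arXiv:2111.05791 — 2 statements merged into one kernel-verified Lean document; each statement's English description precedes it below -/
import Mathlib

section
/- Let Z be a real random variable with continuous, strictly increasing CDF F, and e ~ Laplace(0, 1/ε) independent of Z, with ε > 0. Let G be the CDF of U + e where U ~ Uniform(0,1) is independent of e. Then the privatized variable Z̃ = F⁻¹(G(F(Z) + e)) has CDF F, i.e., Z̃ is equal in distribution to Z. -/
/-!
`F(Z)` is uniform on `(0, 1)` by the probability integral transform, so `F(Z) + e` has the law of
`U + e'`, whose CDF is `G`. That law is a convolution with the Laplace law, which is equivalent to
Lebesgue measure; hence `G` is continuous and strictly increasing, and the probability integral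
transform applies again: `G(F(Z) + e)` is uniform as well. Finally
`F⁻¹(G(F(Z) + e)) ≤ x ↔ G(F(Z) + e) ≤ F x` because `G` takes values in `(0, 1)`, where
`F ∘ F⁻¹ = id`, and the two uniform variables `G(F(Z) + e)` and `F(Z)` lie below `F x` with the
same probability.
-/

open MeasureTheory ProbabilityTheory Set

namespace MeasureTheory.Measure

variable {G : Type*} [MeasurableSpace G]

theorem conv_apply [AddMonoid G] [MeasurableAdd₂ G] (μ ν : Measure G) [SFinite ν] {s : Set G}
    (hs : MeasurableSet s) :
    (μ ∗ ν) s = ∫⁻ x, ν ((x + ·) ⁻¹' s) ∂μ := by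
  rw [conv, map_apply measurable_add hs, prod_apply (measurable_add hs)]
  rfl

theorem absolutelyContinuous_conv [AddGroup G] [MeasurableAdd₂ G] {μ ν ρ : Measure G} [SFinite ν]
    [IsAddLeftInvariant ρ] (hρν : ρ ≪ ν) (hμ : μ ≠ 0) : ρ ≪ μ ∗ ν := by
  refine AbsolutelyContinuous.mk fun s hs hs0 => ?_
  have hmeas : Measurable fun x => ν ((x + ·) ⁻¹' s) :=
    measurable_measure_prodMk_left (measurable_add hs)
  rw [conv_apply μ ν hs, lintegral_eq_zero_iff hmeas] at hs0
  have : (ae μ).NeBot := ae_neBot.2 hμ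
  obtain ⟨x, hx⟩ := hs0.exists
  rw [← measure_preimage_add ρ x s]
  exact hρν hx

end MeasureTheory.Measure

namespace ProbabilityTheory

variable {μ : Measure ℝ}

theorem continuous_cdf [IsProbabilityMeasure μ] [NullSingletonClass μ] : Continuous (cdf μ) := by
  refine continuous_iff_continuousAt.2 fun x =>
    (monotone_cdf μ).continuousAt_iff_leftLim_eq_rightLim.2 ?_
  have hx : (cdf μ).measure {x} = 0 := by rw [measure_cdf]; exact measure_singleton x
  rw [StieltjesFunction.measure_singleton, ENNReal.ofReal_eq_zero] at hx
  rw [(cdf μ).rightLim_eq, le_antisymm ((cdf μ).mono.leftLim_le le_rfl) (by linarith)]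

theorem strictMono_cdf [IsProbabilityMeasure μ] (h : volume ≪ μ) : StrictMono (cdf μ) := by
  intro s t hst
  have hpos : 0 < μ (Ioc s t) :=
    pos_iff_ne_zero.2 fun h0 => hst.not_ge (by simpa using h h0)
  have hsplit : μ (Iic t) = μ (Iic s) + μ (Ioc s t) := by
    rw [← Iic_union_Ioc_eq_Iic hst.le, measure_union (Iic_disjoint_Ioc le_rfl) measurableSet_Ioc]
  rw [← ENNReal.ofReal_lt_ofReal_iff_of_nonneg (cdf_nonneg μ s), ofReal_cdf, ofReal_cdf, hsplit]
  exact ENNReal.lt_add_right (measure_ne_top μ _) hpos.ne'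

theorem cdf_mem_Ioo (h : StrictMono (cdf μ)) (x : ℝ) : cdf μ x ∈ Ioo 0 1 :=
  ⟨(cdf_nonneg μ (x - 1)).trans_lt (h (by linarith)),
    (h (lt_add_one x)).trans_le (cdf_le_one μ (x + 1))⟩

theorem map_cdf_eq_volume_restrict_Ioo [IsProbabilityMeasure μ] (hc : Continuous (cdf μ))
    (hm : StrictMono (cdf μ)) :
    μ.map (cdf μ) = volume.restrict (Ioo 0 1) := by
  refine Measure.ext_of_Iic _ _ fun a => ?_
  rw [Measure.map_apply hc.measurable measurableSet_Iic, Measure.restrict_apply measurableSet_Iic]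
  rcases le_or_gt a 0 with ha0 | ha0
  · have hl : cdf μ ⁻¹' Iic a = ∅ := eq_empty_of_forall_notMem fun x hx =>
      ((cdf_mem_Ioo hm x).1.trans_le (le_trans hx ha0)).false
    have hr : Iic a ∩ Ioo 0 1 = ∅ := eq_empty_of_forall_notMem fun t ⟨hta, ht0, _⟩ =>
      (ht0.trans_le (hta.trans ha0)).false
    simp [hl, hr]
  rcases le_or_gt 1 a with ha1 | ha1
  · have hl : cdf μ ⁻¹' Iic a = univ :=
      eq_univ_of_forall fun x => (cdf_mem_Ioo hm x).2.le.trans ha1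
    have hr : Iic a ∩ Ioo 0 1 = Ioo 0 1 := inter_eq_right.2 fun t ht => ht.2.le.trans ha1
    simp [hl, hr]
  obtain ⟨t, rfl⟩ : a ∈ range (cdf μ) := mem_range_of_exists_le_of_exists_ge hc
    (((tendsto_cdf_atBot μ).eventually_lt_const ha0).exists.imp fun _ => le_of_lt)
    (((tendsto_cdf_atTop μ).eventually_const_lt ha1).exists.imp fun _ => le_of_lt)
  have hl : cdf μ ⁻¹' Iic (cdf μ t) = Iic t := ext fun x => hm.le_iff_le
  have hr : Iic (cdf μ t) ∩ Ioo 0 1 = Ioc 0 (cdf μ t) :=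
    ext fun x =>
      ⟨fun ⟨hxa, hx0, _⟩ => ⟨hx0, hxa⟩, fun ⟨hx0, hxa⟩ => ⟨hxa, hx0, hxa.trans_lt ha1⟩⟩
  rw [hl, hr, Real.volume_Ioc, sub_zero, ofReal_cdf]

section RandomVariable

variable {Ω : Type*} [MeasurableSpace Ω] {P : Measure Ω} [IsProbabilityMeasure P] {X Y : Ω → ℝ}

theorem cdf_map_eq (hX : Measurable X) {H : ℝ → ℝ} (hH : ∀ x, H x = (P {ω | X ω ≤ x}).toReal) :
    ⇑(cdf (P.map X)) = H := by
  have := Measure.isProbabilityMeasure_map (μ := P) hX.aemeasurable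
  ext x
  rw [cdf_eq_real, measureReal_def, Measure.map_apply hX measurableSet_Iic, hH]
  rfl

theorem map_comp_eq_volume_restrict_Ioo (hX : Measurable X) {H : ℝ → ℝ}
    (hH : ⇑(cdf (P.map X)) = H) (hc : Continuous H) (hm : StrictMono H) :
    P.map (fun ω => H (X ω)) = volume.restrict (Ioo 0 1) := by
  subst hH
  have := Measure.isProbabilityMeasure_map (μ := P) hX.aemeasurable
  rw [← map_cdf_eq_volume_restrict_Ioo hc hm, Measure.map_map hc.measurable hX]
  rfl

theorem IndepFun.continuous_cdf_map_add (hXY : IndepFun X Y P) (hX : Measurable X)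
    (hY : Measurable Y) (hY_ac : P.map Y ≪ volume) : Continuous (cdf (P.map (X + Y))) :=
  have : NullSingletonClass (P.map (X + Y)) := hXY.map_add_eq_map_conv_map hX hY ▸
    ⟨fun c => Measure.conv_absolutelyContinuous hY_ac (measure_singleton c)⟩
  have := Measure.isProbabilityMeasure_map (μ := P) (hX.add hY).aemeasurable
  continuous_cdf

theorem IndepFun.strictMono_cdf_map_add (hXY : IndepFun X Y P) (hX : Measurable X)
    (hY : Measurable Y) (hY_ac : volume ≪ P.map Y) : StrictMono (cdf (P.map (X + Y))) :=
  have := Measure.isProbabilityMeasure_map (μ := P) (hX.add hY).aemeasurable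
  have := Measure.isProbabilityMeasure_map (μ := P) hX.aemeasurable
  strictMono_cdf <| hXY.map_add_eq_map_conv_map hX hY ▸
    Measure.absolutelyContinuous_conv hY_ac (NeZero.ne _)

end RandomVariable

end ProbabilityTheory

theorem volume_absolutelyContinuous_laplace {ε : ℝ} (hε : 0 < ε) :
    volume ≪ volume.withDensity fun t => ENNReal.ofReal ((ε / 2) * Real.exp (-ε * |t|)) :=
  withDensity_absolutelyContinuous' (by fun_prop)
    (ae_of_all _ fun _ => (ENNReal.ofReal_pos.2 (by positivity)).ne')

theorem stmt2_general {Ω : Type*} [MeasureSpace Ω] [IsProbabilityMeasure (ℙ : Measure Ω)]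
    (ε : ℝ) (hε : 0 < ε)
    (Z e : Ω → ℝ) (hmZ : Measurable Z) (hme : Measurable e)
    (hZe : IndepFun Z e ℙ)
    (he : Measure.map e ℙ =
      volume.withDensity (fun t => ENNReal.ofReal ((ε / 2) * Real.exp (-ε * |t|))))
    (F : ℝ → ℝ) (hFcont : Continuous F) (hFmono : StrictMono F)
    (hFcdf : ∀ x, F x = (ℙ {ω | Z ω ≤ x}).toReal)
    (Finv : ℝ → ℝ)
    (hFinv₂ : ∀ u : ℝ, 0 < u → u < 1 → F (Finv u) = u)
    -- `G` is the CDF of `U + e'` with `U ~ Uniform(0,1)` independent of `e' ~ Laplace(0,1/ε)`: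
    {Ω' : Type*} [MeasureSpace Ω'] [IsProbabilityMeasure (ℙ : Measure Ω')]
    (U e' : Ω' → ℝ) (hmU : Measurable U) (hme' : Measurable e')
    (hUe' : IndepFun U e' ℙ)
    (hUlaw : Measure.map U ℙ = volume.restrict (Set.Ioo (0 : ℝ) 1))
    (he'law : Measure.map e' ℙ =
      volume.withDensity (fun t => ENNReal.ofReal ((ε / 2) * Real.exp (-ε * |t|))))
    (G : ℝ → ℝ) (hG : ∀ x, G x = (ℙ {ω | U ω + e' ω ≤ x}).toReal) :
    ∀ x : ℝ, ℙ {ω | Finv (G (F (Z ω) + e ω)) ≤ x} = ℙ {ω | Z ω ≤ x} := by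
  intro x
  have hmFZ : Measurable fun ω => F (Z ω) := hFcont.measurable.comp hmZ
  have hmW : Measurable fun ω => F (Z ω) + e ω := hmFZ.add hme
  have hFZ : (ℙ : Measure Ω).map (fun ω => F (Z ω)) = volume.restrict (Ioo 0 1) :=
    map_comp_eq_volume_restrict_Ioo hmZ (cdf_map_eq hmZ hFcdf) hFcont hFmono
  have hW :
      (ℙ : Measure Ω).map (fun ω => F (Z ω) + e ω) = (ℙ : Measure Ω').map (U + e') := by
    rw [hUe'.map_add_eq_map_conv_map hmU hme', hUlaw, he'law, ← hFZ, ← he]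
    exact (hZe.comp hFcont.measurable measurable_id).map_add_eq_map_conv_map hmFZ hme
  have hGcdf : ⇑(cdf ((ℙ : Measure Ω').map (U + e'))) = G := cdf_map_eq (hmU.add hme') hG
  have hGmono := hUe'.strictMono_cdf_map_add hmU hme'
    (he'law ▸ volume_absolutelyContinuous_laplace hε)
  have hG01 (t : ℝ) : G t ∈ Ioo 0 1 := hGcdf ▸ cdf_mem_Ioo hGmono t
  rw [hGcdf] at hGmono
  have hGcont : Continuous G := hGcdf ▸ hUe'.continuous_cdf_map_add hmU hme'
    (he'law ▸ withDensity_absolutelyContinuous _ _)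
  have hmGW : Measurable fun ω => G (F (Z ω) + e ω) := hGcont.measurable.comp hmW
  have hGW : (ℙ : Measure Ω).map (fun ω => G (F (Z ω) + e ω)) = volume.restrict (Ioo 0 1) :=
    map_comp_eq_volume_restrict_Ioo hmW (hW ▸ hGcdf) hGcont hGmono
  calc ℙ {ω | Finv (G (F (Z ω) + e ω)) ≤ x}
      = ℙ ((fun ω => G (F (Z ω) + e ω)) ⁻¹' Iic (F x)) := by
        congr 1
        ext ω
        obtain ⟨hG0, hG1⟩ := hG01 (F (Z ω) + e ω)
        change _ ≤ x ↔ _ ≤ F x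
        rw [← hFmono.le_iff_le, hFinv₂ _ hG0 hG1]
    _ = ℙ ((fun ω => F (Z ω)) ⁻¹' Iic (F x)) := by
        rw [← Measure.map_apply hmGW measurableSet_Iic, hGW, ← hFZ,
          Measure.map_apply hmFZ measurableSet_Iic]
    _ = ℙ {ω | Z ω ≤ x} := by
        simp only [preimage, mem_Iic, hFmono.le_iff_le]

/-- DIP for a known continuous strictly increasing CDF `F`: the privatized
variable `Z̃ = F⁻¹(G(F(Z) + e))` has the same distribution as `Z`.  Here
`e ~ Laplace(0, 1/ε)` is independent of `Z`, and `G` is the CDF of `U + e'`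
with `U ~ Uniform(0,1)` independent of `e' ~ Laplace(0, 1/ε)`. -/
theorem stmt2 {Ω : Type*} [MeasureSpace Ω] [IsProbabilityMeasure (ℙ : Measure Ω)]
    (ε : ℝ) (hε : 0 < ε)
    (Z e : Ω → ℝ) (hmZ : Measurable Z) (hme : Measurable e)
    (hZe : IndepFun Z e ℙ)
    (he : Measure.map e ℙ =
      volume.withDensity (fun t => ENNReal.ofReal ((ε / 2) * Real.exp (-ε * |t|))))
    (F : ℝ → ℝ) (hFcont : Continuous F) (hFmono : StrictMono F)
    (hFcdf : ∀ x, F x = (ℙ {ω | Z ω ≤ x}).toReal)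
    (Finv : ℝ → ℝ) (hFinv₁ : ∀ x, Finv (F x) = x)
    (hFinv₂ : ∀ u : ℝ, 0 < u → u < 1 → F (Finv u) = u)
    -- `G` is the CDF of `U + e'` with `U ~ Uniform(0,1)` independent of `e' ~ Laplace(0,1/ε)`:
    {Ω' : Type*} [MeasureSpace Ω'] [IsProbabilityMeasure (ℙ : Measure Ω')]
    (U e' : Ω' → ℝ) (hmU : Measurable U) (hme' : Measurable e')
    (hUe' : IndepFun U e' ℙ)
    (hUlaw : Measure.map U ℙ = volume.restrict (Set.Ioo (0 : ℝ) 1))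
    (he'law : Measure.map e' ℙ =
      volume.withDensity (fun t => ENNReal.ofReal ((ε / 2) * Real.exp (-ε * |t|))))
    (G : ℝ → ℝ) (hG : ∀ x, G x = (ℙ {ω | U ω + e' ω ≤ x}).toReal) :
    ∀ x : ℝ, ℙ {ω | Finv (G (F (Z ω) + e ω)) ≤ x} = ℙ {ω | Z ω ≤ x} :=
  stmt2_general ε hε Z e hmZ hme hZe he F hFcont hFmono hFcdf Finv hFinv₂ U e' hmU hme' hUe' hUlaw
    he'law G hG
end

section
/- Let e be a real random variable with density f such that f(0) = M₀ > 0 and f(t) → 0 as |t| → ∞ (more precisely, f is integrable). Then for any β₀ ∈ ℝ and β₁ ≠ 0, the linear mechanism m(z) = β₀ + β₁ z + e on ℝ is not ε-differentially private for any ε ≥ 0: there exist z, z' ∈ ℝ and a point t₀ with density ratio f(t₀ − β₀ − β₁ z)/f(t₀ − β₀ − β₁ z') > e^{ε}. -/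
open MeasureTheory Real

/-! If `f` stayed above `M₀ e^{-ε}` everywhere, the positive constant `M₀ e^{-ε}` would be
integrable on `ℝ`, which has infinite measure. So some `s` has `e^ε f(s) < M₀ = f(0)`, and
since `β₁ ≠ 0` the two inputs `z = 0`, `z' = -s/β₁` shift the output `t₀ = β₀` onto `0`
and `s`. -/

theorem MeasureTheory.Integrable.exists_norm_lt {α E : Type*} [MeasurableSpace α]
    {μ : Measure α} [NormedAddCommGroup E] {f : α → E} (hf : Integrable f μ) (hμ : μ Set.univ = ⊤)
    {c : ℝ} (hc : 0 < c) : ∃ x, ‖f x‖ < c := by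
  by_contra! h
  have hconst : Integrable (fun _ : α => c) μ :=
    hf.norm.mono' aestronglyMeasurable_const
      (Filter.Eventually.of_forall fun x => (norm_of_nonneg hc.le).trans_le (h x))
  rcases integrable_const_iff.mp hconst with hc0 | _
  · exact hc.ne' hc0
  · exact measure_ne_top μ Set.univ hμ

theorem stmt8_general (f : ℝ → ℝ) (hint : Integrable f)
    (M₀ : ℝ) (hM₀ : 0 < M₀) (hf0 : f 0 = M₀)
    (β₀ β₁ : ℝ) (hβ₁ : β₁ ≠ 0) (ε : ℝ) :
    ∃ z z' t₀ : ℝ,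
      Real.exp ε * f (t₀ - β₀ - β₁ * z') < f (t₀ - β₀ - β₁ * z) := by
  obtain ⟨s, hs⟩ := hint.exists_norm_lt Real.volume_univ (div_pos hM₀ (exp_pos ε))
  refine ⟨0, -s / β₁, β₀, ?_⟩
  have hz' : β₀ - β₀ - β₁ * (-s / β₁) = s := by field_simp; ring
  rw [hz', sub_self, mul_zero, sub_zero, hf0, ← lt_div_iff₀' (exp_pos ε)]
  exact (le_abs_self _).trans_lt hs

/-- Lemma 2 (univariate case): a linear mechanism `m(z) = β₀ + β₁ z + e`
(`β₁ ≠ 0`) with noise density `f` (integrable, `f(0) = M₀ > 0`) on data with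
unbounded support is not ε-differentially private for any `ε ≥ 0`: there are
inputs `z, z'` and an output `t₀` whose conditional density ratio exceeds
`e^ε`. -/
theorem stmt8 (f : ℝ → ℝ) (hf : ∀ t, 0 ≤ f t) (hint : Integrable f)
    (M₀ : ℝ) (hM₀ : 0 < M₀) (hf0 : f 0 = M₀)
    (β₀ β₁ : ℝ) (hβ₁ : β₁ ≠ 0) (ε : ℝ) (hε : 0 ≤ ε) :
    ∃ z z' t₀ : ℝ,
      Real.exp ε * f (t₀ - β₀ - β₁ * z') < f (t₀ - β₀ - β₁ * z) :=
  stmt8_general f hint M₀ hM₀ hf0 β₀ β₁ hβ₁ ε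
end
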